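/- Let n ∈ ℕ and let r ∈ P(2,2) be the partition whose blocks are {the two upper points} and {the two lower points}. Let A be a unital C*-algebra and let u_{ij} ∈ A (1 ≤ i,j ≤ n) be self-adjoint elements which fulfill the relations R(r), R(p₀) for some p₀ ∈ P(0,l) (l ≥ 1), and R(q₀) for some q₀ ∈ P(k,0) (k ≥ 1). Then Σ_{a=1}^n u_{ia}u_{ja} = δ_{ij}·1 and Σ_{a=1}^n u_{ai}u_{aj} = δ_{ij}·1 for all 1 ≤ i,j ≤ n (i.e., uuᵗ = uᵗu = 1 in M_n(A)). -/

import Mathlib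

/-!
The relations `R(r)` say that `u uᵗ` and `uᵗ u` are the same scalar matrix `x • 1`, where
`x = ∑ₑ u i e * u i e`; by associativity of `u uᵗ u`, `x` commutes with every `u a b`. Hence the
`l`-fold tensor power of `u` is again "orthogonal up to `x ^ l`". The relations `R(p₀)` say that
this tensor power fixes the indicator vector of the set `S` of labellings admissible for `p₀`,
which contains the constant labellings; computing the squared length of this vector in two ways
gives `#S • x ^ l = #S • 1` with `#S ≠ 0`. So `x ^ l = 1`, and since `x` is a sum of squares of
self-adjoint elements, `x ≥ 0` forces `x = 1`.
-/

open scoped BigOperators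

/-- A partition with `k` upper and `l` lower points, encoded as an equivalence
relation on the disjoint union of the points; the blocks of the partition are
the equivalence classes. -/
abbrev PointPartition (k l : ℕ) := Setoid (Fin k ⊕ Fin l)

namespace Partition

/-- `DeltaCond p α β` holds iff `δ_p(α,β) = 1`, i.e. the labelling of the upper
points by `α` and of the lower points by `β` is constant on every block of `p`. -/
def DeltaCond {k l n : ℕ} (p : PointPartition k l) (α : Fin k → Fin n) (β : Fin l → Fin n) : Prop :=
  ∀ x y : Fin k ⊕ Fin l, p.r x y → Sum.elim α β x = Sum.elim α β y

/-- The ordered product `u_{γ₁α₁} ⋯ u_{γ_mα_m}`. -/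
def uProd {m n : ℕ} {A : Type*} [Monoid A] (u : Fin n → Fin n → A) (γ α : Fin m → Fin n) : A :=
  (List.ofFn fun i : Fin m => u (γ i) (α i)).prod

open Classical in
/-- The elements `u i j` fulfill the relations `R(p)` associated to the partition `p`. -/
def FulfillsR {k l n : ℕ} {A : Type*} [Ring A] (p : PointPartition k l) (u : Fin n → Fin n → A) :
    Prop :=
  ∀ (α : Fin k → Fin n) (β : Fin l → Fin n),
    (∑ γ : Fin k → Fin n, if DeltaCond p γ β then uProd u γ α else 0)
      = ∑ γ' : Fin l → Fin n, if DeltaCond p α γ' then uProd u β γ' else 0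

end Partition

/-- The partition `r ∈ P(2,2)` whose blocks are the two upper points and the two lower
points. -/
def pairOverPair : PointPartition 2 2 :=
  Setoid.ker (Sum.isLeft : Fin 2 ⊕ Fin 2 → Bool)

namespace Partition

section uProd

variable {m n : ℕ} {A : Type*} [Monoid A]

@[simp]
lemma uProd_zero (u : Fin n → Fin n → A) (γ α : Fin 0 → Fin n) : uProd u γ α = 1 := by
  simp [uProd]

lemma uProd_cons (u : Fin n → Fin n → A) (b c : Fin n) (β γ : Fin m → Fin n) :
    uProd u (Fin.cons b β) (Fin.cons c γ) = u b c * uProd u β γ := by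
  simp [uProd, List.ofFn_succ]

lemma uProd_two (u : Fin n → Fin n → A) (γ α : Fin 2 → Fin n) :
    uProd u γ α = u (γ 0) (α 0) * u (γ 1) (α 1) := by
  simp [uProd, List.ofFn_succ]

end uProd

lemma pairOverPair_apply (x y : Fin 2 ⊕ Fin 2) : pairOverPair x y ↔ x.isLeft = y.isLeft :=
  Iff.rfl

lemma deltaCond_pairOverPair_iff {n : ℕ} (γ β : Fin 2 → Fin n) :
    DeltaCond pairOverPair γ β ↔ γ 0 = γ 1 ∧ β 0 = β 1 := by
  simp only [DeltaCond, pairOverPair_apply, Sum.forall, Fin.forall_fin_two, Sum.isLeft_inl,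
    Sum.isLeft_inr, Sum.elim_inl, Sum.elim_inr]
  grind

lemma sum_fin_two_arrow_ite_eq {n : ℕ} {M : Type*} [AddCommMonoid M] (f : (Fin 2 → Fin n) → M) :
    ∑ γ : Fin 2 → Fin n, (if γ 0 = γ 1 then f γ else 0) = ∑ e, f fun _ ↦ e := by
  rw [← (finTwoArrowEquiv _).symm.sum_comp, Fintype.sum_prod_type]
  simp only [finTwoArrowEquiv_symm_apply, Matrix.cons_val_zero, Matrix.cons_val_one,
    Finset.sum_ite_eq, Finset.mem_univ, if_true]
  exact Fintype.sum_congr _ _ fun e ↦ congrArg f (funext (Fin.forall_fin_two.2 ⟨rfl, rfl⟩))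

lemma fulfillsR_pairOverPair_iff {n : ℕ} {A : Type*} [Ring A] (u : Fin n → Fin n → A) :
    FulfillsR pairOverPair u ↔ ∀ α β : Fin 2 → Fin n,
      (if β 0 = β 1 then ∑ e, u e (α 0) * u e (α 1) else 0)
        = if α 0 = α 1 then ∑ e, u (β 0) e * u (β 1) e else 0 := by
  simp only [FulfillsR, deltaCond_pairOverPair_iff, uProd_two, ite_and, sum_fin_two_arrow_ite_eq,
    Finset.sum_ite_irrel, Finset.sum_const_zero]

section PairOverPair

variable {n : ℕ} {A : Type*} [Ring A] {u : Fin n → Fin n → A}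

lemma FulfillsR.sum_mul_col_eq_ite (hr : FulfillsR pairOverPair u) (i c d : Fin n) :
    ∑ e, u e c * u e d = if c = d then ∑ e, u i e * u i e else 0 := by
  simpa using (fulfillsR_pairOverPair_iff u).1 hr ![c, d] fun _ ↦ i

lemma FulfillsR.sum_mul_row_eq_ite (hr : FulfillsR pairOverPair u) (i a b : Fin n) :
    ∑ e, u a e * u b e = if a = b then ∑ e, u i e * u i e else 0 := by
  simpa [hr.sum_mul_col_eq_ite i i i, eq_comm] using
    (fulfillsR_pairOverPair_iff u).1 hr (fun _ ↦ i) ![a, b]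

end PairOverPair

end Partition

lemma commute_of_sum_mul_eq_ite {n : ℕ} {A : Type*} [Ring A] {u : Fin n → Fin n → A} {x : A}
    (hcol : ∀ c d, ∑ e, u e c * u e d = if c = d then x else 0)
    (hrow : ∀ a b, ∑ e, u a e * u b e = if a = b then x else 0) (a b : Fin n) :
    Commute x (u a b) :=
  calc x * u a b = ∑ e, (∑ d, u a d * u e d) * u e b := by simp [hrow]
    _ = ∑ d, u a d * ∑ e, u e d * u e b := by
      simp only [Finset.sum_mul, Finset.mul_sum, mul_assoc]
      exact Finset.sum_comm
    _ = u a b * x := by simp [hcol]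

namespace Partition

section TensorPower

variable {m n : ℕ} {A : Type*}

lemma sum_uProd_mul_star_uProd [Ring A] [StarRing A] {u : Fin n → Fin n → A} {x : A}
    (hcol : ∀ c d, ∑ e, u e c * star (u e d) = if c = d then x else 0)
    (hx : ∀ a b, Commute x (u a b)) :
    ∀ {m : ℕ} (γ δ : Fin m → Fin n),
      ∑ β, uProd u β γ * star (uProd u β δ) = if γ = δ then x ^ m else 0
  | 0, γ, δ => by simp [Subsingleton.elim γ δ]
  | m + 1, γ, δ => by
    induction γ using Fin.consCases with | _ c γ => ?_
    induction δ using Fin.consCases with | _ d δ => ?_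
    rw [← (Fin.consEquiv fun _ ↦ Fin n).sum_comp, Fintype.sum_prod_type]
    have peel : ∀ b, ∑ β, uProd u (Fin.cons b β) (Fin.cons c γ) *
        star (uProd u (Fin.cons b β) (Fin.cons d δ))
        = u b c * (∑ β, uProd u β γ * star (uProd u β δ)) * star (u b d) := fun b ↦ by
      simp only [uProd_cons, star_mul, Finset.mul_sum, Finset.sum_mul, mul_assoc]
    simp only [Fin.consEquiv, Equiv.coe_fn_mk, peel, sum_uProd_mul_star_uProd hcol hx γ δ,
      Fin.cons_inj]
    by_cases hγδ : γ = δ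
    · have hpull : ∀ b, u b c * x ^ m * star (u b d) = x ^ m * (u b c * star (u b d)) := fun b ↦ by
        rw [← ((hx b c).pow_left m).eq, mul_assoc]
      simp only [hγδ, if_true, and_true, hpull, ← Finset.mul_sum, hcol, mul_ite, mul_zero,
        pow_succ]
    · simp [hγδ]

lemma sum_sum_uProd_mul_star_sum_uProd [Ring A] [StarRing A] {u : Fin n → Fin n → A} {x : A}
    (hcol : ∀ c d, ∑ e, u e c * star (u e d) = if c = d then x else 0)
    (hx : ∀ a b, Commute x (u a b)) (S : Finset (Fin m → Fin n)) :
    ∑ β, (∑ γ ∈ S, uProd u β γ) * star (∑ γ ∈ S, uProd u β γ) = S.card • x ^ m := by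
  simp_rw [star_sum, Finset.sum_mul_sum]
  rw [Finset.sum_comm]
  simp_rw [Finset.sum_comm (s := Finset.univ), sum_uProd_mul_star_uProd hcol hx]
  simp

end TensorPower

lemma deltaCond_const {k l n : ℕ} (p : PointPartition k l) (i : Fin n) :
    DeltaCond p (fun _ ↦ i) (fun _ ↦ i) := by
  rintro (_ | _) (_ | _) _ <;> rfl

open Classical in
noncomputable def admissibleLabellings {l : ℕ} (p : PointPartition 0 l) (n : ℕ) :
    Finset (Fin l → Fin n) :=
  {β | DeltaCond p Fin.elim0 β}

lemma admissibleLabellings_nonempty {l n : ℕ} (p : PointPartition 0 l) (i : Fin n) :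
    (admissibleLabellings p n).Nonempty :=
  ⟨fun _ ↦ i, by simpa [admissibleLabellings, Subsingleton.elim Fin.elim0 fun _ ↦ i]
    using deltaCond_const p i⟩

section UpperEmpty

variable {l n : ℕ} {A : Type*} [Ring A] {p : PointPartition 0 l} {u : Fin n → Fin n → A}

lemma FulfillsR.sum_uProd_admissibleLabellings (hp : FulfillsR p u) (β : Fin l → Fin n) :
    ∑ γ ∈ admissibleLabellings p n, uProd u β γ
      = if β ∈ admissibleLabellings p n then 1 else 0 := by
  classical
  rw [admissibleLabellings, Finset.sum_filter, ← hp Fin.elim0 β, Fintype.sum_unique,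
    Subsingleton.elim default Fin.elim0, uProd_zero]
  exact if_congr (by simp) rfl rfl

lemma FulfillsR.card_nsmul_pow_eq [StarRing A] (hp : FulfillsR p u) {x : A}
    (hcol : ∀ c d, ∑ e, u e c * star (u e d) = if c = d then x else 0)
    (hx : ∀ a b, Commute x (u a b)) :
    (admissibleLabellings p n).card • x ^ l = (admissibleLabellings p n).card • 1 := by
  calc _ = ∑ β, (∑ γ ∈ admissibleLabellings p n, uProd u β γ)
          * star (∑ γ ∈ admissibleLabellings p n, uProd u β γ) :=
        (sum_sum_uProd_mul_star_sum_uProd hcol hx _).symm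
    _ = ∑ β, if β ∈ admissibleLabellings p n then 1 else 0 := by
        refine Finset.sum_congr rfl fun β _ ↦ ?_
        rw [hp.sum_uProd_admissibleLabellings]
        split_ifs <;> simp
    _ = _ := by simp

end UpperEmpty

end Partition

lemma eq_one_of_nonneg_of_pow_eq_one {A : Type*} [CStarAlgebra A] [PartialOrder A]
    [StarOrderedRing A] {a : A} {l : ℕ} (hl : l ≠ 0) (ha : 0 ≤ a) (h : a ^ l = 1) : a = 1 := by
  have hl' : (l : ℝ) ≠ 0 := Nat.cast_ne_zero.2 hl
  calc a = (a ^ (l : ℝ)) ^ (l : ℝ)⁻¹ := by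
        rw [CFC.rpow_rpow_of_exponent_nonneg a _ _ l.cast_nonneg (inv_nonneg.2 l.cast_nonneg),
          mul_inv_cancel₀ hl', CFC.rpow_one a]
    _ = 1 := by rw [CFC.rpow_natCast a l, h, CFC.one_rpow]

theorem pairOverPair_enforces_orthogonality_general {n l : ℕ} (hl : 1 ≤ l)
    {A : Type*} [CStarAlgebra A] (u : Fin n → Fin n → A)
    (hsa : ∀ i j, star (u i j) = u i j)
    (hr : Partition.FulfillsR pairOverPair u)
    (p₀ : PointPartition 0 l) (hp₀ : Partition.FulfillsR p₀ u) :
    ∀ i j : Fin n,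
      (∑ a : Fin n, u i a * u j a) = (if i = j then 1 else 0)
      ∧ (∑ a : Fin n, u a i * u a j) = (if i = j then 1 else 0) := by
  intro i j
  let : PartialOrder A := CStarAlgebra.spectralOrder A
  have : StarOrderedRing A := CStarAlgebra.spectralOrderedRing A
  have hcol := hr.sum_mul_col_eq_ite i
  have hrow := hr.sum_mul_row_eq_ite i
  set x := ∑ e, u i e * u i e
  have hcomm := commute_of_sum_mul_eq_ite hcol hrow
  have hpow : x ^ l = 1 := by
    have hcard := hp₀.card_nsmul_pow_eq (by simpa only [hsa] using hcol) hcomm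
    rw [← Nat.cast_smul_eq_nsmul ℂ, ← Nat.cast_smul_eq_nsmul ℂ] at hcard
    exact smul_right_injective A
      (Nat.cast_ne_zero.2 (Partition.admissibleLabellings_nonempty p₀ i).card_ne_zero) hcard
  have hx0 : 0 ≤ x := Finset.sum_nonneg fun e _ ↦ by
    simpa only [hsa] using star_mul_self_nonneg (u i e)
  have hx : x = 1 := eq_one_of_nonneg_of_pow_eq_one (by omega) hx0 hpow
  exact ⟨by rw [hrow, hx], by rw [hcol, hx]⟩

/-- **The pair-over-pair partition enforces orthogonality.** If the self-adjoint
elements `u i j` of a unital C*-algebra fulfill `R(r)` for the partition `r ∈ P(2,2)`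
with blocks {upper points} and {lower points}, as well as `R(p₀)` for some
`p₀ ∈ P(0,l)` (`l ≥ 1`) and `R(q₀)` for some `q₀ ∈ P(k,0)` (`k ≥ 1`), then the matrix
`u` is orthogonal: `u uᵗ = uᵗ u = 1`. -/
theorem pairOverPair_enforces_orthogonality {n k l : ℕ} (hl : 1 ≤ l) (hk : 1 ≤ k)
    {A : Type*} [CStarAlgebra A] (u : Fin n → Fin n → A)
    (hsa : ∀ i j, star (u i j) = u i j)
    (hr : Partition.FulfillsR pairOverPair u)
    (p₀ : PointPartition 0 l) (hp₀ : Partition.FulfillsR p₀ u)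
    (q₀ : PointPartition k 0) (hq₀ : Partition.FulfillsR q₀ u) :
    ∀ i j : Fin n,
      (∑ a : Fin n, u i a * u j a) = (if i = j then 1 else 0)
      ∧ (∑ a : Fin n, u a i * u a j) = (if i = j then 1 else 0) :=
  pairOverPair_enforces_orthogonality_general hl u hsa hr p₀ hp₀
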